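/- Let H be an acceptable Hintikka set. If (s ≐ t) ∈ H, then (t ≐ s) ∈ H (symmetry of Leibniz equality membership, without any saturation assumption). -/
import Mathlib


namespace HintikkaHOL

/-- Simple types over base types `o` (Booleans) and `i` (individuals). -/
inductive Ty : Type
  | o : Ty
  | i : Ty
  | arr : Ty → Ty → Ty
deriving DecidableEq

open Ty

/-- Typed de Bruijn variables. -/
inductive Var : List Ty → Ty → Type
  | vz {Γ τ} : Var (τ :: Γ) τ
  | vs {Γ σ τ} : Var Γ τ → Var (σ :: Γ) τ

/-- Terms of Church's type theory over a signature `S` of parameters,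
with primitive equality `eq τ : τ → τ → o` as the only logical constant. -/
inductive Tm (S : Ty → Type) : List Ty → Ty → Type
  | var {Γ τ} : Var Γ τ → Tm S Γ τ
  | par {Γ τ} : S τ → Tm S Γ τ
  | eq {Γ} (τ : Ty) : Tm S Γ (arr τ (arr τ o))
  | app {Γ a b} : Tm S Γ (arr a b) → Tm S Γ a → Tm S Γ b
  | lam {Γ a b} : Tm S (a :: Γ) b → Tm S Γ (arr a b)

variable {S : Ty → Type}

/-- Renamings. -/
abbrev Ren (Γ Δ : List Ty) : Type := ∀ τ, Var Γ τ → Var Δ τ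

def Ren.lift {Γ Δ} (r : Ren Γ Δ) (σ : Ty) : Ren (σ :: Γ) (σ :: Δ)
  | _, .vz => .vz
  | _, .vs w => .vs (r _ w)

def rename {Γ Δ} (r : Ren Γ Δ) : ∀ {τ}, Tm S Γ τ → Tm S Δ τ
  | _, .var v => .var (r _ v)
  | _, .par p => .par p
  | _, .eq τ => .eq τ
  | _, .app f a => .app (rename r f) (rename r a)
  | _, .lam b => .lam (rename (Ren.lift r _) b)

/-- Substitutions. -/
abbrev Sub (S : Ty → Type) (Γ Δ : List Ty) : Type := ∀ τ, Var Γ τ → Tm S Δ τ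

def Sub.lift {Γ Δ} (s : Sub S Γ Δ) (σ : Ty) : Sub S (σ :: Γ) (σ :: Δ)
  | _, .vz => .var .vz
  | _, .vs w => rename (fun _ u => Var.vs u) (s _ w)

def subst {Γ Δ} (s : Sub S Γ Δ) : ∀ {τ}, Tm S Γ τ → Tm S Δ τ
  | _, .var v => s _ v
  | _, .par p => .par p
  | _, .eq τ => .eq τ
  | _, .app f a => .app (subst s f) (subst s a)
  | _, .lam b => .lam (subst (Sub.lift s _) b)

/-- The substitution sending the outermost variable to `a`. -/
def Sub.single {Γ σ} (a : Tm S Γ σ) : Sub S (σ :: Γ) Γ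
  | _, .vz => a
  | _, .vs w => .var w

def subst1 {Γ σ τ} (a : Tm S Γ σ) (b : Tm S (σ :: Γ) τ) : Tm S Γ τ :=
  subst (Sub.single a) b

/-- Weakening of a closed term into any context. -/
def Ren.fromEmpty {Γ} : Ren [] Γ := fun _ v => nomatch v

def wk0 {Γ τ} (t : Tm S [] τ) : Tm S Γ τ :=
  rename Ren.fromEmpty t

/-- The equation `s =^τ t`. -/
def eqT {Γ} (τ : Ty) (s t : Tm S Γ τ) : Tm S Γ o :=
  .app (.app (.eq τ) s) t

/-- `⊤ := (=^o) =^{ooo} (=^o)`. -/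
def topT {Γ} : Tm S Γ o :=
  eqT (arr o (arr o o)) (.eq o) (.eq o)

/-- `⊥ := (λP:o. P) =^{oo} (λP:o. ⊤)`. -/
def botT {Γ} : Tm S Γ o :=
  eqT (arr o o) (.lam (.var .vz)) (.lam topT)

/-- `¬ := λP:o. P =^o ⊥`. -/
def notC {Γ} : Tm S Γ (arr o o) :=
  .lam (eqT o (.var .vz) botT)

/-- `¬ s`. -/
def negT {Γ} (s : Tm S Γ o) : Tm S Γ o :=
  .app notC s

/-- `∧ := λP Q. (λF:ooo. F ⊤ ⊤) =^{o(ooo)} (λF. F P Q)`. -/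
def andC {Γ} : Tm S Γ (arr o (arr o o)) :=
  .lam (.lam (eqT (arr (arr o (arr o o)) o)
    (.lam (.app (.app (.var .vz) topT) topT))
    (.lam (.app (.app (.var .vz) (.var (.vs (.vs .vz)))) (.var (.vs .vz))))))

/-- `∨ := λP Q. ¬(¬P ∧ ¬Q)`. -/
def orC {Γ} : Tm S Γ (arr o (arr o o)) :=
  .lam (.lam (negT (.app (.app andC (negT (.var (.vs .vz)))) (negT (.var .vz)))))

/-- `⇒ := λP Q. ¬P ∨ Q`. -/
def impC {Γ} : Tm S Γ (arr o (arr o o)) :=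
  .lam (.lam (.app (.app orC (negT (.var (.vs .vz)))) (.var .vz)))

/-- `Π^τ := λP:oτ. P =^{oτ} (λX:τ. ⊤)`. -/
def piC {Γ} (τ : Ty) : Tm S Γ (arr (arr τ o) o) :=
  .lam (eqT (arr τ o) (.var .vz) (.lam topT))

/-- Leibniz equality `s ≐ t := Π^{oτ} (λP:oτ. (P s) ⇒ (P t))`. -/
def leibT {Γ τ} (s t : Tm S Γ τ) : Tm S Γ o :=
  .app (piC (arr τ o))
    (.lam (.app (.app impC (.app (.var .vz) (rename (fun _ v => Var.vs v) s)))
                (.app (.var .vz) (rename (fun _ v => Var.vs v) t))))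

/-- βη-conversion. -/
inductive Conv : ∀ {Γ : List Ty} {τ : Ty}, Tm S Γ τ → Tm S Γ τ → Prop
  | refl {Γ τ} (s : Tm S Γ τ) : Conv s s
  | symm {Γ τ} {s t : Tm S Γ τ} : Conv s t → Conv t s
  | trans {Γ τ} {s t u : Tm S Γ τ} : Conv s t → Conv t u → Conv s u
  | appCongr {Γ a b} {f f' : Tm S Γ (arr a b)} {s s' : Tm S Γ a} :
      Conv f f' → Conv s s' → Conv (.app f s) (.app f' s')
  | lamCongr {Γ a b} {s s' : Tm S (a :: Γ) b} :
      Conv s s' → Conv (.lam s) (.lam s')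
  | beta {Γ a b} (body : Tm S (a :: Γ) b) (s : Tm S Γ a) :
      Conv (.app (.lam body) s) (subst1 s body)
  | eta {Γ a b} (f : Tm S Γ (arr a b)) :
      Conv (.lam (.app (rename (fun _ v => Var.vs v) f) (.var .vz))) f

/-- Atomic formulas: head symbol is a parameter (or a variable). -/
inductive Atomic : ∀ {Γ : List Ty} {τ : Ty}, Tm S Γ τ → Prop
  | par {Γ τ} (p : S τ) : Atomic (Tm.par (Γ := Γ) p)
  | var {Γ τ} (v : Var Γ τ) : Atomic (Tm.var (S := S) v)
  | app {Γ a b} {f : Tm S Γ (arr a b)} {s : Tm S Γ a} : Atomic f → Atomic (.app f s)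

/-- Paired spines of closed arguments, for the decomposition property `∇_d`:
a value of `Spine2 S σ τ` is a list of pairs `(sⁱ, tⁱ)` of closed terms turning a head
of type `σ` into two applications `h s¹ … sⁿ` and `h t¹ … tⁿ` of type `τ`. -/
inductive Spine2 (S : Ty → Type) : Ty → Ty → Type
  | nil {τ} : Spine2 S τ τ
  | cons {a σ τ} (s t : Tm S [] a) (rest : Spine2 S σ τ) : Spine2 S (arr a σ) τ

def appSpineL : ∀ {σ τ}, Tm S [] σ → Spine2 S σ τ → Tm S [] τ
  | _, _, h, .nil => h
  | _, _, h, .cons s _ rest => appSpineL (.app h s) rest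

def appSpineR : ∀ {σ τ}, Tm S [] σ → Spine2 S σ τ → Tm S [] τ
  | _, _, h, .nil => h
  | _, _, h, .cons _ t rest => appSpineR (.app h t) rest

/-- `∃ i, (sⁱ ≠ tⁱ) ∈ H` for a paired spine. -/
def ExistsNeq (H : Set (Tm S [] o)) : ∀ {σ τ}, Spine2 S σ τ → Prop
  | _, _, .nil => False
  | _, _, .cons (a := a) s t rest => negT (eqT a s t) ∈ H ∨ ExistsNeq H rest

/-- Steen's acceptable Hintikka sets: sets of closed formulas (sentences) satisfying
the ten properties `∇_c, ∇_βη, ∇_=^r, ∇_=^s, ∇_b^+, ∇_b^-, ∇_f^+, ∇_f^-, ∇_m, ∇_d`. -/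
structure Acceptable (S : Ty → Type) (H : Set (Tm S [] o)) : Prop where
  nabla_c : ∀ s : Tm S [] o, ¬ (s ∈ H ∧ negT s ∈ H)
  nabla_betaEta : ∀ s t : Tm S [] o, Conv s t → s ∈ H → t ∈ H
  nabla_eq_r : ∀ {τ} (s : Tm S [] τ), negT (eqT τ s s) ∉ H
  nabla_eq_s : ∀ {τ} (u : Tm S [τ] o) (s t : Tm S [] τ),
      subst1 s u ∈ H → eqT τ s t ∈ H → subst1 t u ∈ H
  nabla_b_pos : ∀ s t : Tm S [] o, eqT o s t ∈ H →
      (s ∈ H ∧ t ∈ H) ∨ (negT s ∈ H ∧ negT t ∈ H)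
  nabla_b_neg : ∀ s t : Tm S [] o, negT (eqT o s t) ∈ H →
      (s ∈ H ∧ negT t ∈ H) ∨ (negT s ∈ H ∧ t ∈ H)
  nabla_f_pos : ∀ {a b} (f g : Tm S [] (arr a b)), eqT (arr a b) f g ∈ H →
      ∀ s : Tm S [] a, eqT b (.app f s) (.app g s) ∈ H
  nabla_f_neg : ∀ {a b} (f g : Tm S [] (arr a b)), negT (eqT (arr a b) f g) ∈ H →
      ∃ w : S a, negT (eqT b (.app f (.par w)) (.app g (.par w))) ∈ H
  nabla_m : ∀ s t : Tm S [] o, Atomic s → Atomic t → s ∈ H → negT t ∈ H →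
      negT (eqT o s t) ∈ H
  nabla_d : ∀ {σ τ} (h : Tm S [] σ) (sp : Spine2 S σ τ),
      negT (eqT τ (appSpineL h sp) (appSpineR h sp)) ∈ H → ExistsNeq H sp

/-- `H` is saturated iff `s ∈ H` or `¬s ∈ H` for every closed formula `s`. -/
def Saturated (H : Set (Tm S [] o)) : Prop :=
  ∀ s : Tm S [] o, s ∈ H ∨ negT s ∈ H

variable {S : Ty → Type} {H : Set (Tm S [] Ty.o)}

/-! ### Substitution calculus lemmas -/

theorem ren_congr {Γ τ} (u : Tm S Γ τ) : ∀ {Δ} (r r' : Ren Γ Δ),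
    (∀ τ v, r τ v = r' τ v) → rename r u = rename r' u := by
  induction u with
  | var v => intro Δ r r' h; simp [rename, h]
  | par p => intros; rfl
  | eq τ => intros; rfl
  | app f a ihf iha => intro Δ r r' h; simp [rename, ihf _ _ h, iha _ _ h]
  | lam b ih =>
      intro Δ r r' h
      simp only [rename]
      congr 1
      apply ih
      intro τ v
      cases v with
      | vz => rfl
      | vs w => simp [Ren.lift, h]

theorem sub_congr {Γ τ} (u : Tm S Γ τ) : ∀ {Δ} (σ σ' : Sub S Γ Δ),
    (∀ τ v, σ τ v = σ' τ v) → subst σ u = subst σ' u := by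
  induction u with
  | var v => intro Δ σ σ' h; simp [subst, h]
  | par p => intros; rfl
  | eq τ => intros; rfl
  | app f a ihf iha => intro Δ σ σ' h; simp [subst, ihf _ _ h, iha _ _ h]
  | lam b ih =>
      intro Δ σ σ' h
      simp only [subst]
      congr 1
      apply ih
      intro τ v
      cases v with
      | vz => rfl
      | vs w => simp [Sub.lift, h]

theorem subst_of_ren {Γ τ} (u : Tm S Γ τ) : ∀ {Δ} (r : Ren Γ Δ),
    subst (fun τ v => .var (r τ v)) u = rename r u := by
  induction u with
  | var v => intros; rfl
  | par p => intros; rfl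
  | eq τ => intros; rfl
  | app f a ihf iha => intro Δ r; simp [subst, rename, ihf, iha]
  | lam b ih =>
      intro Δ r
      simp only [subst, rename]
      congr 1
      rw [← ih]
      apply sub_congr
      intro τ v
      cases v with
      | vz => rfl
      | vs w => rfl

theorem sub_ren {Γ τ} (u : Tm S Γ τ) : ∀ {Δ Θ} (r : Ren Γ Δ) (σ : Sub S Δ Θ),
    subst σ (rename r u) = subst (fun τ v => σ τ (r τ v)) u := by
  induction u with
  | var v => intros; rfl
  | par p => intros; rfl
  | eq τ => intros; rfl
  | app f a ihf iha => intro Δ Θ r σ; simp [subst, rename, ihf, iha]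
  | lam b ih =>
      intro Δ Θ r σ
      simp only [subst, rename]
      congr 1
      rw [ih]
      apply sub_congr
      intro τ v
      cases v with
      | vz => rfl
      | vs w => rfl

theorem subst_id {Γ τ} (u : Tm S Γ τ) : subst (fun _ v => .var v) u = u := by
  induction u with
  | var v => rfl
  | par p => rfl
  | eq τ => rfl
  | app f a ihf iha => simp [subst, ihf, iha]
  | lam b ih =>
      simp only [subst]
      congr 1
      exact (sub_congr b _ _ (fun τ v => by cases v <;> rfl)).trans ih

/-- Substituting into a weakened term is the identity. -/
theorem subst1_wk {Γ ρ τ} (a : Tm S Γ ρ) (u : Tm S Γ τ) :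
    subst1 a (rename (fun _ v => Var.vs v) u) = u := by
  unfold subst1
  rw [sub_ren]
  exact (sub_congr u _ _ (fun τ v => rfl)).trans (subst_id u)

/-- Any substitution on a closed term acts like any renaming. -/
theorem closed_subst {τ Δ} (σ : Sub S [] Δ) (r : Ren [] Δ) (u : Tm S [] τ) :
    subst σ u = rename r u := by
  rw [← subst_of_ren]
  exact sub_congr u _ _ (fun τ v => nomatch v)

theorem closed_ren {τ Δ} (r r' : Ren [] Δ) (u : Tm S [] τ) :
    rename r u = rename r' u :=
  ren_congr u r r' (fun τ v => nomatch v)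

theorem ren_ren {Γ τ} (u : Tm S Γ τ) : ∀ {Δ Θ} (r : Ren Γ Δ) (r' : Ren Δ Θ),
    rename r' (rename r u) = rename (fun τ v => r' τ (r τ v)) u := by
  induction u with
  | var v => intros; rfl
  | par p => intros; rfl
  | eq τ => intros; rfl
  | app f a ihf iha => intro Δ Θ r r'; simp [rename, ihf, iha]
  | lam b ih =>
      intro Δ Θ r r'
      simp only [rename]
      congr 1
      rw [ih]
      exact ren_congr b _ _ (fun τ v => by cases v <;> rfl)

theorem ren_sub {Γ τ} (u : Tm S Γ τ) : ∀ {Δ Θ} (σ : Sub S Γ Δ) (r : Ren Δ Θ),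
    rename r (subst σ u) = subst (fun τ v => rename r (σ τ v)) u := by
  induction u with
  | var v => intros; rfl
  | par p => intros; rfl
  | eq τ => intros; rfl
  | app f a ihf iha => intro Δ Θ σ r; simp [rename, subst, ihf, iha]
  | lam b ih =>
      intro Δ Θ σ r
      simp only [rename, subst]
      congr 1
      rw [ih]
      apply sub_congr
      intro τ v
      cases v with
      | vz => rfl
      | vs w =>
          show rename (Ren.lift r _) (rename (fun _ u => Var.vs u) (σ _ w)) = _
          rw [ren_ren]
          show _ = rename (fun _ u => Var.vs u) (rename r (σ _ w))
          rw [ren_ren]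
          exact ren_congr _ _ _ (fun τ v => rfl)

/-- `subst` form of `subst1_wk`, convenient for `simp`. -/
theorem subst_wk {Γ ρ τ} (a : Tm S Γ ρ) (u : Tm S Γ τ) :
    subst (Sub.single a) (rename (fun _ v => Var.vs v) u) = u := subst1_wk a u

theorem subst_lift_wk {Γ Δ ρ τ} (σ : Sub S Γ Δ) (u : Tm S Γ τ) :
    subst (Sub.lift σ ρ) (rename (fun _ v => Var.vs v) u)
      = rename (fun _ v => Var.vs v) (subst σ u) := by
  rw [sub_ren, ren_sub]
  exact sub_congr u _ _ (fun τ v => rfl)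

/-! ### Conv helpers -/

theorem conv_negT {Γ} {a b : Tm S Γ o} (h : Conv a b) : Conv (negT a) (negT b) :=
  Conv.appCongr (Conv.refl _) h

theorem conv_eqT {Γ τ} {a a' b b' : Tm S Γ τ} (ha : Conv a a') (hb : Conv b b') :
    Conv (eqT τ a b) (eqT τ a' b') :=
  Conv.appCongr (Conv.appCongr (Conv.refl _) ha) hb

theorem conv_beta' {Γ a b} (body : Tm S (a :: Γ) b) (u : Tm S Γ a) {c : Tm S Γ b}
    (h : subst1 u body = c) : Conv (.app (.lam body) u) c := h ▸ Conv.beta body u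

/-! ### Basic membership facts -/

theorem negT_topT_not_mem (hH : Acceptable S H) : negT (topT : Tm S [] o) ∉ H :=
  hH.nabla_eq_r (Tm.eq o)

theorem botT_not_mem (hH : Acceptable S H) : (botT : Tm S [] o) ∉ H := by
  intro hb
  have h1 := hH.nabla_f_pos _ _ hb (negT topT)
  have h2 : eqT o (negT topT) topT ∈ H :=
    hH.nabla_betaEta _ _ (conv_eqT (conv_beta' (Tm.var .vz) (negT topT) rfl)
      (conv_beta' topT (negT topT) rfl)) h1
  rcases hH.nabla_b_pos _ _ h2 with ⟨h3, _⟩ | ⟨_, h3⟩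
  · exact negT_topT_not_mem hH h3
  · exact negT_topT_not_mem hH h3

theorem dne_mem (hH : Acceptable S H) {g : Tm S [] o} (h : negT (negT g) ∈ H) : g ∈ H := by
  have h1 : negT (eqT o g botT) ∈ H :=
    hH.nabla_betaEta _ _ (conv_negT (conv_beta' (eqT o (.var .vz) botT) g rfl)) h
  rcases hH.nabla_b_neg _ _ h1 with ⟨hg, _⟩ | ⟨_, hb⟩
  · exact hg
  · exact (botT_not_mem hH hb).elim

/-- Weakening by one binder. -/
def wk1 {Γ σ τ} (u : Tm S Γ τ) : Tm S (σ :: Γ) τ := rename (fun _ v => Var.vs v) u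

theorem subst_wk1 {Γ ρ τ} (a : Tm S Γ ρ) (u : Tm S Γ τ) :
    subst (Sub.single a) (wk1 u) = u := subst1_wk a u

theorem subst_lift_wk1 {Γ Δ ρ τ} (σ : Sub S Γ Δ) (u : Tm S Γ τ) :
    subst (Sub.lift σ ρ) (wk1 u) = wk1 (subst σ u) := subst_lift_wk σ u

theorem subst_wk0 {Γ Δ τ} (σ : Sub S Γ Δ) (u : Tm S [] τ) :
    subst σ (wk0 u) = wk0 u := by
  unfold wk0
  rw [sub_ren]
  exact closed_subst _ _ u

theorem wk0_closed {τ} (u : Tm S [] τ) : (wk0 u : Tm S [] τ) = u := by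
  unfold wk0
  rw [← subst_of_ren]
  exact (sub_congr u _ _ (fun τ v => nomatch v)).trans (subst_id u)

theorem wk0_eq_wk1 {σ τ} (u : Tm S [] τ) : (wk0 u : Tm S [σ] τ) = wk1 u :=
  closed_ren _ _ u

/-- Implication elimination when the antecedent's negation is not in `H`. -/
theorem imp_elim (hH : Acceptable S H) (e g : Tm S [] o)
    (hne : negT e ∉ H) (h : Tm.app (Tm.app impC e) g ∈ H) : g ∈ H := by
  have c1 : Conv (Tm.app impC e)
      (Tm.lam (.app (.app orC (negT (wk1 e))) (.var .vz))) :=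
    conv_beta' _ e rfl
  have c2 : Conv (Tm.app (Tm.app impC e) g) (Tm.app (Tm.app orC (negT e)) g) :=
    Conv.trans (Conv.appCongr c1 (Conv.refl g))
      (conv_beta' _ g (by
        show Tm.app (Tm.app orC (negT (subst (Sub.single g) (wk1 e)))) g = _
        rw [subst_wk1]))
  have c3a : Conv (Tm.app orC (negT e))
      (Tm.lam (negT (Tm.app (Tm.app andC (negT (wk1 (negT e)))) (negT (.var .vz))))) :=
    conv_beta' _ (negT e) rfl
  have c3 : Conv (Tm.app (Tm.app orC (negT e)) g)
      (negT (Tm.app (Tm.app andC (negT (negT e))) (negT g))) :=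
    Conv.trans (Conv.appCongr c3a (Conv.refl g))
      (conv_beta' _ g (by
        show negT (Tm.app (Tm.app andC (negT (subst (Sub.single g) (wk1 (negT e))))) (negT g)) = _
        rw [subst_wk1]))
  have c4a : Conv (Tm.app andC (negT (negT e)))
      (Tm.lam (eqT (arr (arr o (arr o o)) o)
        (.lam (.app (.app (.var .vz) topT) topT))
        (.lam (.app (.app (.var .vz) (wk1 (wk1 (negT (negT e))))) (.var (.vs .vz)))))) :=
    conv_beta' _ (negT (negT e)) rfl
  have c4 : Conv (Tm.app (Tm.app andC (negT (negT e))) (negT g))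
      (eqT (arr (arr o (arr o o)) o)
        (.lam (.app (.app (.var .vz) topT) topT))
        (.lam (.app (.app (.var .vz) (wk1 (negT (negT e)))) (wk1 (negT g))))) :=
    Conv.trans (Conv.appCongr c4a (Conv.refl (negT g)))
      (conv_beta' _ (negT g) (by
        show eqT (arr (arr o (arr o o)) o)
          (.lam (.app (.app (.var .vz) topT) topT))
          (.lam (.app (.app (.var .vz)
            (subst (Sub.lift (Sub.single (negT g)) _) (wk1 (wk1 (negT (negT e))))))
            (wk1 (negT g)))) = _
        rw [subst_lift_wk1, subst_wk1]))
  have hOr : negT (eqT (arr (arr o (arr o o)) o)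
      (.lam (.app (.app (.var .vz) topT) topT))
      (.lam (.app (.app (.var .vz) (wk1 (negT (negT e)))) (wk1 (negT g))))) ∈ H :=
    hH.nabla_betaEta _ _ (Conv.trans c2 (Conv.trans c3 (conv_negT c4))) h
  obtain ⟨w, hw⟩ := hH.nabla_f_neg _ _ hOr
  have hw2 : negT (eqT o (.app (.app (.par w) topT) topT)
      (.app (.app (.par w) (negT (negT e))) (negT g))) ∈ H :=
    hH.nabla_betaEta _ _ (conv_negT (conv_eqT
      (conv_beta' (.app (.app (.var .vz) topT) topT) (.par w) rfl)
      (conv_beta' _ (.par w) (by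
        show Tm.app (Tm.app (Tm.par w) (subst (Sub.single (Tm.par w)) (wk1 (negT (negT e)))))
          (subst (Sub.single (Tm.par w)) (wk1 (negT g))) = _
        rw [subst_wk1, subst_wk1])))) hw
  have hd : negT (eqT o topT (negT (negT e))) ∈ H ∨
      (negT (eqT o topT (negT g)) ∈ H ∨ False) :=
    hH.nabla_d (.par w) (.cons topT (negT (negT e)) (.cons topT (negT g) .nil)) hw2
  rcases hd with h1 | h2 | h2'
  · rcases hH.nabla_b_neg _ _ h1 with ⟨_, hA⟩ | ⟨hnt, _⟩
    · exact absurd (dne_mem hH hA) hne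
    · exact absurd hnt (negT_topT_not_mem hH)
  · rcases hH.nabla_b_neg _ _ h2 with ⟨_, hB⟩ | ⟨hnt, _⟩
    · exact dne_mem hH hB
    · exact absurd hnt (negT_topT_not_mem hH)
  · exact h2'.elim

/-- From `s ≐ t ∈ H`, instantiating the Leibniz quantifier at `λx. rb` yields the
implication `rb[s] ⇒ rb[t]` in `H`. -/
theorem leib_inst (hH : Acceptable S H) {τ : Ty} (s t : Tm S [] τ) (h : leibT s t ∈ H)
    (rb : Tm S [τ] o) :
    Tm.app (Tm.app impC (subst1 s rb)) (subst1 t rb) ∈ H := by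
  have E : eqT (arr (arr τ o) o)
      (Tm.lam (.app (.app impC (.app (.var .vz) (wk1 s))) (.app (.var .vz) (wk1 t))))
      (Tm.lam topT) ∈ H :=
    hH.nabla_betaEta _ _ (conv_beta' (eqT (arr (arr τ o) o) (.var .vz) (.lam topT))
      (Tm.lam (.app (.app impC (.app (.var .vz) (wk1 s))) (.app (.var .vz) (wk1 t)))) rfl) h
  have hf := hH.nabla_f_pos _ _ E (Tm.lam rb)
  have h2 : eqT o (Tm.app (Tm.app impC (Tm.app (Tm.lam rb) s)) (Tm.app (Tm.lam rb) t)) topT ∈ H :=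
    hH.nabla_betaEta _ _ (conv_eqT
      (conv_beta' _ (Tm.lam rb) (by
        show Tm.app (Tm.app impC (Tm.app (Tm.lam rb) (subst (Sub.single (Tm.lam rb)) (wk1 s))))
          (Tm.app (Tm.lam rb) (subst (Sub.single (Tm.lam rb)) (wk1 t))) = _
        rw [subst_wk1, subst_wk1]))
      (conv_beta' topT (Tm.lam rb) rfl)) hf
  have h3 : eqT o (Tm.app (Tm.app impC (subst1 s rb)) (subst1 t rb)) topT ∈ H :=
    hH.nabla_betaEta _ _ (conv_eqT
      (Conv.appCongr (Conv.appCongr (Conv.refl _) (conv_beta' rb s rfl))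
        (conv_beta' rb t rfl))
      (Conv.refl _)) h2
  rcases hH.nabla_b_pos _ _ h3 with ⟨hi, _⟩ | ⟨_, hnt⟩
  · exact hi
  · exact absurd hnt (negT_topT_not_mem hH)

theorem prim_eq_mem (hH : Acceptable S H) {τ : Ty} (s t : Tm S [] τ)
    (h : leibT s t ∈ H) : eqT τ s t ∈ H := by
  have h1 := leib_inst hH s t h (eqT τ (wk0 s) (.var .vz))
  have e1 : subst1 s (eqT τ (wk0 s) (.var .vz)) = eqT τ s s := by
    show eqT τ (subst (Sub.single s) (wk0 s)) s = _
    rw [subst_wk0, wk0_closed]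
  have e2 : subst1 t (eqT τ (wk0 s) (.var .vz)) = eqT τ s t := by
    show eqT τ (subst (Sub.single t) (wk0 s)) t = _
    rw [subst_wk0, wk0_closed]
  rw [e1, e2] at h1
  exact imp_elim hH _ _ (hH.nabla_eq_r s) h1

theorem prim_eq_mem' (hH : Acceptable S H) {τ : Ty} (s t : Tm S [] τ)
    (h : leibT s t ∈ H) : eqT τ t s ∈ H := by
  have h1 := leib_inst hH s t h (eqT τ (.var .vz) (wk0 s))
  have e1 : subst1 s (eqT τ (.var .vz) (wk0 s)) = eqT τ s s := by
    show eqT τ s (subst (Sub.single s) (wk0 s)) = _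
    rw [subst_wk0, wk0_closed]
  have e2 : subst1 t (eqT τ (.var .vz) (wk0 s)) = eqT τ t s := by
    show eqT τ t (subst (Sub.single t) (wk0 s)) = _
    rw [subst_wk0, wk0_closed]
  rw [e1, e2] at h1
  exact imp_elim hH _ _ (hH.nabla_eq_r s) h1

/-- Symmetry of Leibniz equality membership (without a saturation assumption). -/
theorem leib_symm_mem (hH : Acceptable S H) {τ : Ty} (s t : Tm S [] τ)
    (h : leibT s t ∈ H) : leibT t s ∈ H := by
  have g1 : eqT τ s t ∈ H := prim_eq_mem hH s t h
  have g2 : eqT τ t s ∈ H := prim_eq_mem' hH s t h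
  -- first rewrite: leibT s t  ⇒  leibT t t
  have hu1s : subst1 s (Tm.app (piC (arr τ o))
      (.lam (.app (.app impC (.app (.var .vz) (.var (.vs .vz))))
        (.app (.var .vz) (wk0 t)))) : Tm S [τ] o) = leibT s t := by
    show Tm.app (piC (arr τ o))
      (.lam (.app (.app impC (.app (.var .vz) (wk1 s)))
        (.app (.var .vz) (subst (Sub.lift (Sub.single s) _) (wk0 t))))) = _
    rw [subst_wk0, wk0_eq_wk1]
    rfl
  have hu1t : subst1 t (Tm.app (piC (arr τ o))
      (.lam (.app (.app impC (.app (.var .vz) (.var (.vs .vz))))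
        (.app (.var .vz) (wk0 t)))) : Tm S [τ] o) = leibT t t := by
    show Tm.app (piC (arr τ o))
      (.lam (.app (.app impC (.app (.var .vz) (wk1 t)))
        (.app (.var .vz) (subst (Sub.lift (Sub.single t) _) (wk0 t))))) = _
    rw [subst_wk0, wk0_eq_wk1]
    rfl
  have M1 : leibT t t ∈ H := by
    rw [← hu1t]
    exact hH.nabla_eq_s _ s t (by rw [hu1s]; exact h) g1
  -- second rewrite: leibT t t  ⇒  leibT t s
  have hu2t : subst1 t (Tm.app (piC (arr τ o))
      (.lam (.app (.app impC (.app (.var .vz) (wk0 t)))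
        (.app (.var .vz) (.var (.vs .vz))))) : Tm S [τ] o) = leibT t t := by
    show Tm.app (piC (arr τ o))
      (.lam (.app (.app impC (.app (.var .vz) (subst (Sub.lift (Sub.single t) _) (wk0 t))))
        (.app (.var .vz) (wk1 t)))) = _
    rw [subst_wk0, wk0_eq_wk1]
    rfl
  have hu2s : subst1 s (Tm.app (piC (arr τ o))
      (.lam (.app (.app impC (.app (.var .vz) (wk0 t)))
        (.app (.var .vz) (.var (.vs .vz))))) : Tm S [τ] o) = leibT t s := by
    show Tm.app (piC (arr τ o))
      (.lam (.app (.app impC (.app (.var .vz) (subst (Sub.lift (Sub.single s) _) (wk0 t))))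
        (.app (.var .vz) (wk1 s)))) = _
    rw [subst_wk0, wk0_eq_wk1]
    rfl
  rw [← hu2s]
  exact hH.nabla_eq_s _ t s (by rw [hu2t]; exact M1) g2

end HintikkaHOL
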